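/- Let f : ℂ → ℂ be entire and suppose for some c > 0 and every N ∈ ℕ, sup_{|Im z| ≤ N} |f(z)|·e^{c|z|} < ∞. Then the Fourier transform f̂(ξ) = ∫_ℝ f(t)e^{−itξ} dt extends holomorphically to the strip {|Im ξ| < c} and, for every n ∈ ℕ, satisfies |f̂(x)| ≤ C_n·e^{−n|x|} for all real x and some constant C_n. -/

import Mathlib

/-! The exponential decay of `f` on horizontal strips dominates `f(t) e^{-itξ}` and its
`ξ`-derivative `-it f(t) e^{-itξ}` by an integrable function, locally uniformly in `|Im ξ| < c`,
so the Fourier integral is holomorphic there. For real `x`, Cauchy's theorem moves the line of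
integration from `ℝ` to `ℝ + iy` with `y = ∓n` (opposite in sign to `x`); the vertical sides of
the rectangles vanish in the limit, and on the new line `|e^{-izx}| = e^{xy} = e^{-n|x|}`. -/

open MeasureTheory Set Filter Complex

open scoped Topology

lemma integrable_exp_neg_mul_abs {c : ℝ} (hc : 0 < c) :
    Integrable fun t : ℝ => Real.exp (-(c * |t|)) := by
  have hIoi : IntegrableOn (fun t : ℝ => Real.exp (-(c * |t|))) (Ioi 0) :=
    (exp_neg_integrableOn_Ioi 0 hc).congr_fun
      (fun t ht => by simp [abs_of_pos (show 0 < t from ht)]) measurableSet_Ioi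
  have hIic : IntegrableOn (fun t : ℝ => Real.exp (-(c * |t|))) (Iic 0) := by
    have hneg : MeasurableEmbedding fun t : ℝ => -t := (Homeomorph.neg ℝ).measurableEmbedding
    rw [← Measure.map_neg_eq_self (volume : Measure ℝ), hneg.integrableOn_map_iff]
    simpa [Function.comp_def] using Iff.mpr integrableOn_Ici_iff_integrableOn_Ioi hIoi
  simpa using hIic.union hIoi

lemma norm_cexp_neg_I_mul_mul (z w : ℂ) :
    ‖cexp (-I * z * w)‖ = Real.exp (z.re * w.im + z.im * w.re) := by
  rw [norm_exp]
  simp [mul_re, mul_im]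

lemma abs_mul_exp_neg_mul_abs_le {ε : ℝ} (hε : 0 < ε) (t : ℝ) :
    |t| * Real.exp (-(ε * |t|)) ≤ 2 / ε * Real.exp (-(ε / 2 * |t|)) := by
  have hlin : |t| ≤ 2 / ε * Real.exp (ε / 2 * |t|) := by
    calc |t| = 2 / ε * (ε / 2 * |t|) := by field_simp
      _ ≤ 2 / ε * Real.exp (ε / 2 * |t|) := by
        gcongr; linarith [Real.add_one_le_exp (ε / 2 * |t|)]
  calc |t| * Real.exp (-(ε * |t|))
      ≤ 2 / ε * Real.exp (ε / 2 * |t|) * Real.exp (-(ε * |t|)) := by gcongr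
    _ = 2 / ε * Real.exp (-(ε / 2 * |t|)) := by
      rw [mul_assoc, ← Real.exp_add]; ring_nf

section ContourShift

variable {g : ℂ → ℂ} {K c y : ℝ}

lemma norm_integral_vertical_le
    (hK : ∀ z : ℂ, |z.im| ≤ |y| → ‖g z‖ ≤ K * Real.exp (-(c * |z.re|))) (r : ℝ) :
    ‖∫ s in (0 : ℝ)..y, g (r + s * I)‖ ≤ K * Real.exp (-(c * |r|)) * |y| := by
  refine (intervalIntegral.norm_integral_le_of_norm_le_const fun s hs => ?_).trans_eq
    (by rw [sub_zero])
  have hs' : |s| ≤ |y| := by simpa using abs_sub_left_of_mem_uIcc (a := 0) (uIoc_subset_uIcc hs)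
  simpa using hK (r + s * I) (by simpa using hs')

lemma tendsto_integral_vertical (hc : 0 < c)
    (hK : ∀ z : ℂ, |z.im| ≤ |y| → ‖g z‖ ≤ K * Real.exp (-(c * |z.re|))) :
    Tendsto (fun r : ℝ => ∫ s in (0 : ℝ)..y, g (r + s * I)) (cocompact ℝ) (𝓝 0) := by
  have hexp : Tendsto (fun r : ℝ => Real.exp (-(c * |r|))) (cocompact ℝ) (𝓝 0) :=
    Real.tendsto_exp_atBot.comp <| tendsto_neg_atTop_atBot.comp <|
      tendsto_norm_cocompact_atTop.const_mul_atTop hc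
  refine squeeze_zero_norm (norm_integral_vertical_le hK) ?_
  simpa using (hexp.const_mul K).mul_const |y|

lemma integrable_comp_add_mul_I (hg : Continuous g) (hc : 0 < c)
    (hK : ∀ z : ℂ, |z.im| ≤ |y| → ‖g z‖ ≤ K * Real.exp (-(c * |z.re|)))
    {s : ℝ} (hs : |s| ≤ |y|) :
    Integrable fun t : ℝ => g (t + s * I) :=
  ((integrable_exp_neg_mul_abs hc).const_mul K).mono' (by fun_prop)
    (ae_of_all _ fun t => by simpa using hK (t + s * I) (by simpa using hs))

/-- Cauchy's theorem on the rectangles `[-T, T] × [0, y]`, whose vertical sides contribute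
nothing in the limit `T → ∞`. -/
theorem integral_add_mul_I_eq_integral (hg : Differentiable ℂ g) (hc : 0 < c)
    (hK : ∀ z : ℂ, |z.im| ≤ |y| → ‖g z‖ ≤ K * Real.exp (-(c * |z.re|))) :
    ∫ t : ℝ, g (t + y * I) = ∫ t : ℝ, g t := by
  set V : ℝ → ℂ := fun r => ∫ s in (0 : ℝ)..y, g (r + s * I)
  have hrect : ∀ T : ℝ,
      ∫ t in -T..T, g (t + y * I) = (∫ t in -T..T, g t) + (I * V T - I * V (-T)) := by
    intro T
    have h := integral_boundary_rect_eq_zero_of_differentiableOn g (-T) (T + y * I)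
      hg.differentiableOn
    simp only [neg_im, ofReal_im, neg_zero, ofReal_zero, zero_mul, add_zero, neg_re,
      ofReal_re, add_re, mul_re, I_re, mul_zero, I_im, tsub_zero, add_im, mul_im,
      mul_one, zero_add, smul_eq_mul, ofReal_neg] at h
    simp only [V, ofReal_neg]
    linear_combination -h
  have hint : ∀ {s : ℝ}, |s| ≤ |y| → Integrable fun t : ℝ => g (t + s * I) :=
    integrable_comp_add_mul_I hg.continuous hc hK
  have hV := tendsto_integral_vertical hc hK
  have hreal : Tendsto (fun T : ℝ => ∫ t in -T..T, g t) atTop (𝓝 (∫ t : ℝ, g t)) :=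
    intervalIntegral_tendsto_integral (by simpa using hint (s := 0) (by simp))
      tendsto_neg_atTop_atBot tendsto_id
  have hsides : Tendsto (fun T : ℝ => I * V T - I * V (-T)) atTop (𝓝 (I * 0 - I * 0)) :=
    ((hV.mono_left atTop_le_cocompact).const_mul I).sub
      ((hV.comp (tendsto_neg_atTop_atBot.mono_right atBot_le_cocompact)).const_mul I)
  have hlim := hreal.add hsides
  simp_rw [← hrect, mul_zero, sub_zero, add_zero] at hlim
  exact tendsto_nhds_unique
    (intervalIntegral_tendsto_integral (hint le_rfl) tendsto_neg_atTop_atBot tendsto_id) hlim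

end ContourShift

lemma norm_le_mul_exp_neg_mul_abs_re {w z : ℂ} {c M : ℝ} (hc : 0 ≤ c)
    (h : ‖w‖ * Real.exp (c * ‖z‖) ≤ M) : ‖w‖ ≤ M * Real.exp (-(c * |z.re|)) := by
  have hM : 0 ≤ M := (by positivity : 0 ≤ ‖w‖ * Real.exp (c * ‖z‖)).trans h
  calc ‖w‖ ≤ M * Real.exp (-(c * ‖z‖)) := by
        rwa [Real.exp_neg, ← div_eq_mul_inv, le_div_iff₀ (Real.exp_pos _)]
    _ ≤ M * Real.exp (-(c * |z.re|)) := by gcongr; exact abs_re_le_norm z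

section FourierLaplace

variable {φ : ℝ → ℂ} {M c : ℝ}

lemma norm_mul_cexp_neg_I_mul_le (hM : ∀ t, ‖φ t‖ ≤ M * Real.exp (-(c * |t|))) {ε : ℝ} {ξ : ℂ}
    (hξ : |ξ.im| ≤ c - ε) (t : ℝ) :
    ‖φ t * cexp (-I * t * ξ)‖ ≤ M * Real.exp (-(ε * |t|)) := by
  have hexp : t * ξ.im ≤ (c - ε) * |t| :=
    calc t * ξ.im ≤ |t| * |ξ.im| := by rw [← abs_mul]; exact le_abs_self _
      _ ≤ (c - ε) * |t| := by rw [mul_comm]; gcongr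
  rw [norm_mul, norm_cexp_neg_I_mul_mul]
  simp only [ofReal_re, ofReal_im, zero_mul, add_zero]
  calc ‖φ t‖ * Real.exp (t * ξ.im)
      ≤ M * Real.exp (-(c * |t|)) * Real.exp ((c - ε) * |t|) :=
        mul_le_mul (hM t) (Real.exp_le_exp.mpr hexp) (Real.exp_pos _).le
          ((norm_nonneg _).trans (hM t))
    _ = M * Real.exp (-(ε * |t|)) := by rw [mul_assoc, ← Real.exp_add]; ring_nf

theorem differentiableOn_integral_mul_cexp_neg_I_mul (hφ : AEStronglyMeasurable φ)
    (hM : ∀ t, ‖φ t‖ ≤ M * Real.exp (-(c * |t|))) :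
    DifferentiableOn ℂ (fun ξ : ℂ => ∫ t : ℝ, φ t * cexp (-I * t * ξ)) {ξ | |ξ.im| < c} := by
  intro ξ₀ hξ₀
  obtain ⟨ε, hε, hcε⟩ : ∃ ε > 0, |ξ₀.im| + ε = c - ε :=
    ⟨(c - |ξ₀.im|) / 2, by linarith [show |ξ₀.im| < c from hξ₀], by ring⟩
  have hM0 : 0 ≤ M := by simpa using (norm_nonneg _).trans (hM 0)
  have hball : ∀ ξ ∈ Metric.ball ξ₀ ε, |ξ.im| ≤ c - ε := fun ξ hξ => by
    have h := (abs_im_le_norm (ξ - ξ₀)).trans (mem_ball_iff_norm.mp hξ).le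
    rw [sub_im] at h
    linarith [abs_sub_abs_le_abs_sub ξ.im ξ₀.im]
  have hmeas : ∀ ξ : ℂ, AEStronglyMeasurable fun t : ℝ => φ t * cexp (-I * t * ξ) :=
    fun ξ => hφ.mul (by fun_prop : Continuous fun t : ℝ => cexp (-I * t * ξ)).aestronglyMeasurable
  have hderiv : ∀ (t : ℝ) (ξ : ℂ), HasDerivAt (fun ξ => φ t * cexp (-I * t * ξ))
      (-I * t * (φ t * cexp (-I * t * ξ))) ξ := fun t ξ => by
    refine ((((hasDerivAt_id' ξ).const_mul (-I * t)).cexp).const_mul (φ t)).congr_deriv ?_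
    ring
  have hderiv_le : ∀ (t : ℝ), ∀ ξ ∈ Metric.ball ξ₀ ε,
      ‖-I * t * (φ t * cexp (-I * t * ξ))‖ ≤ M * (2 / ε) * Real.exp (-(ε / 2 * |t|)) :=
    fun t ξ hξ =>
    calc ‖-I * t * (φ t * cexp (-I * t * ξ))‖ = |t| * ‖φ t * cexp (-I * t * ξ)‖ := by simp
      _ ≤ |t| * (M * Real.exp (-(ε * |t|))) := by
        gcongr; exact norm_mul_cexp_neg_I_mul_le hM (hball ξ hξ) t
      _ = M * (|t| * Real.exp (-(ε * |t|))) := by ring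
      _ ≤ M * (2 / ε * Real.exp (-(ε / 2 * |t|))) :=
        mul_le_mul_of_nonneg_left (abs_mul_exp_neg_mul_abs_le hε t) hM0
      _ = M * (2 / ε) * Real.exp (-(ε / 2 * |t|)) := by ring
  have hint : Integrable fun t : ℝ => φ t * cexp (-I * t * ξ₀) :=
    ((integrable_exp_neg_mul_abs hε).const_mul M).mono' (hmeas ξ₀)
      (ae_of_all _ (norm_mul_cexp_neg_I_mul_le hM (hball ξ₀ (Metric.mem_ball_self hε))))
  obtain ⟨-, h⟩ := hasDerivAt_integral_of_dominated_loc_of_deriv_le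
    (Metric.ball_mem_nhds ξ₀ hε) (Eventually.of_forall hmeas) hint
    ((by fun_prop : Continuous fun t : ℝ => -I * t).aestronglyMeasurable.mul (hmeas ξ₀))
    (ae_of_all _ hderiv_le) ((integrable_exp_neg_mul_abs (half_pos hε)).const_mul _)
    (ae_of_all _ fun t ξ _ => hderiv t ξ)
  exact h.differentiableAt.differentiableWithinAt

end FourierLaplace

theorem norm_integral_mul_cexp_le_of_strip {f : ℂ → ℂ} (hf : Differentiable ℂ f) {M c y : ℝ}
    (hc : 0 < c) (hM : ∀ z : ℂ, |z.im| ≤ |y| → ‖f z‖ ≤ M * Real.exp (-(c * |z.re|))) (x : ℝ) :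
    ‖∫ t : ℝ, f t * cexp (-I * t * x)‖ ≤
      (M * ∫ t : ℝ, Real.exp (-(c * |t|))) * Real.exp (x * y) := by
  set g : ℂ → ℂ := fun z => f z * cexp (-I * z * x)
  have hg_norm : ∀ z, ‖g z‖ = ‖f z‖ * Real.exp (z.im * x) := fun z => by
    simp only [g, norm_mul, norm_cexp_neg_I_mul_mul, ofReal_re, ofReal_im, mul_zero, zero_add]
  have hg_strip : ∀ z : ℂ, |z.im| ≤ |y| →
      ‖g z‖ ≤ M * Real.exp (|x| * |y|) * Real.exp (-(c * |z.re|)) := fun z hz => by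
    have hM0 : 0 ≤ M * Real.exp (-(c * |z.re|)) := (norm_nonneg _).trans (hM z hz)
    have hexp : z.im * x ≤ |x| * |y| :=
      calc z.im * x ≤ |z.im| * |x| := by rw [← abs_mul]; exact le_abs_self _
        _ ≤ |x| * |y| := by rw [mul_comm]; gcongr
    calc ‖g z‖ ≤ M * Real.exp (-(c * |z.re|)) * Real.exp (|x| * |y|) := by
          rw [hg_norm]; exact mul_le_mul (hM z hz) (Real.exp_le_exp.mpr hexp) (by positivity) hM0
      _ = M * Real.exp (|x| * |y|) * Real.exp (-(c * |z.re|)) := by ring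
  have hshift := integral_add_mul_I_eq_integral (g := g) (hf.mul (by fun_prop)) hc hg_strip
  have hline : ∀ t : ℝ, ‖g (t + y * I)‖ ≤ M * Real.exp (x * y) * Real.exp (-(c * |t|)) :=
    fun t => by
    have hre : (t + y * I : ℂ).re = t := by simp
    have him : (t + y * I : ℂ).im = y := by simp
    have h := hM (t + y * I) (by rw [him])
    rw [hre] at h
    rw [hg_norm, him]
    calc ‖f (t + y * I)‖ * Real.exp (y * x) ≤ M * Real.exp (-(c * |t|)) * Real.exp (y * x) := by
          gcongr
      _ = M * Real.exp (x * y) * Real.exp (-(c * |t|)) := by rw [mul_comm y x]; ring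
  change ‖∫ t : ℝ, g t‖ ≤ _
  rw [← hshift]
  calc ‖∫ t : ℝ, g (t + y * I)‖ ≤ ∫ t : ℝ, M * Real.exp (x * y) * Real.exp (-(c * |t|)) :=
        norm_integral_le_of_norm_le ((integrable_exp_neg_mul_abs hc).const_mul _)
          (ae_of_all _ hline)
    _ = (M * ∫ t : ℝ, Real.exp (-(c * |t|))) * Real.exp (x * y) := by
        rw [integral_const_mul]; ring

/-- Let f be entire and suppose that for some c > 0 and every N ∈ ℕ,
sup_{|Im z| ≤ N} |f(z)|·e^{c|z|} < ∞. Then the Fourier transform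
f̂(ξ) = ∫ f(t)e^{−itξ} dt extends holomorphically to the strip {|Im ξ| < c} and decays
superexponentially on ℝ: for every n ∈ ℕ, |f̂(x)| ≤ C_n·e^{−n|x|}. -/
theorem stmt18 (f : ℂ → ℂ) (hf : Differentiable ℂ f) (c : ℝ) (hc : 0 < c)
    (hbound : ∀ N : ℕ, ∃ M : ℝ, ∀ z : ℂ, |z.im| ≤ N →
      ‖f z‖ * Real.exp (c * ‖z‖) ≤ M) :
    ∃ F : ℂ → ℂ, DifferentiableOn ℂ F {ξ : ℂ | |ξ.im| < c} ∧
      (∀ x : ℝ, F x = ∫ t : ℝ, f t * Complex.exp (-Complex.I * t * x)) ∧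
      ∀ n : ℕ, ∃ C : ℝ, ∀ x : ℝ,
        ‖∫ t : ℝ, f t * Complex.exp (-Complex.I * t * x)‖
          ≤ C * Real.exp (-n * |x|) := by
  have hdecay : ∀ N : ℕ, ∃ M : ℝ, ∀ z : ℂ, |z.im| ≤ N →
      ‖f z‖ ≤ M * Real.exp (-(c * |z.re|)) := fun N =>
    (hbound N).imp fun _ hM z hz => norm_le_mul_exp_neg_mul_abs_re hc.le (hM z hz)
  obtain ⟨M₀, hM₀⟩ := hdecay 0
  refine ⟨fun ξ => ∫ t : ℝ, f t * cexp (-I * t * ξ),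
    differentiableOn_integral_mul_cexp_neg_I_mul
      (hf.continuous.comp continuous_ofReal).aestronglyMeasurable
      (fun t => by simpa using hM₀ t (by simp)),
    fun x => rfl, fun n => ?_⟩
  obtain ⟨M, hM⟩ := hdecay n
  refine ⟨M * ∫ t : ℝ, Real.exp (-(c * |t|)), fun x => ?_⟩
  obtain ⟨y, hy, hxy⟩ : ∃ y : ℝ, |y| = n ∧ x * y = -n * |x| := by
    rcases le_total 0 x with hx | hx
    · exact ⟨-n, by simp, by rw [abs_of_nonneg hx]; ring⟩
    · exact ⟨n, by simp, by rw [abs_of_nonpos hx]; ring⟩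
  rw [← hxy]
  exact norm_integral_mul_cexp_le_of_strip hf hc (fun z hz => hM z (hy ▸ hz)) x
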